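/- For every λ ≠ 0, the function f_{Z^λ}(t) := (|λ| / √(2π t (1−t)³)) · exp(−λ² t / (2(1−t))) on (0,1) is a probability density: ∫₀¹ (|λ| / √(2π t (1−t)³)) · exp(−λ² t / (2(1−t))) dt = 1. -/

import Mathlib

open MeasureTheory Real

/-!
The substitution `t = u² / (u² + λ²)` maps `u ∈ (0, ∞)` increasingly onto `t ∈ (0, 1)`, with
`1 - t = λ² / (u² + λ²)` and `dt = 2 u λ² / (u² + λ²)² du`. Under it `λ² t / (1 - t) = u²`, and the
density becomes the half-normal density `2 / √(2π) · exp (-u² / 2)`, whose integral over `(0, ∞)`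
is `1`.
-/

open Set

noncomputable def fZ (lam t : ℝ) : ℝ :=
  |lam| / √(2 * π * t * (1 - t) ^ 3) * exp (-(lam ^ 2 * t) / (2 * (1 - t)))

section SqDivSqAdd

variable {a : ℝ}

lemma one_sub_sq_div_sq_add (ha : 0 < a) (u : ℝ) : 1 - u ^ 2 / (u ^ 2 + a) = a / (u ^ 2 + a) := by
  have : u ^ 2 + a ≠ 0 := by positivity
  field_simp
  ring

lemma strictMonoOn_sq_div_sq_add (ha : 0 < a) :
    StrictMonoOn (fun u : ℝ => u ^ 2 / (u ^ 2 + a)) (Ici 0) := by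
  intro u hu v hv huv
  have huv2 : u ^ 2 < v ^ 2 := pow_lt_pow_left₀ huv hu two_ne_zero
  rw [← sub_lt_sub_iff_left 1, one_sub_sq_div_sq_add ha, one_sub_sq_div_sq_add ha]
  gcongr

lemma image_sq_div_sq_add_Ioi (ha : 0 < a) :
    (fun u : ℝ => u ^ 2 / (u ^ 2 + a)) '' Ioi 0 = Ioo 0 1 := by
  apply Subset.antisymm
  · rintro _ ⟨u, hu, rfl⟩
    have hu : 0 < u := hu
    exact ⟨by positivity, (div_lt_one (by positivity)).2 (by linarith)⟩
  · rintro t ⟨ht0, ht1⟩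
    have hpos : 0 < a * t / (1 - t) := div_pos (mul_pos ha ht0) (by linarith)
    refine ⟨√(a * t / (1 - t)), sqrt_pos.2 hpos, ?_⟩
    have : 1 - t ≠ 0 := by linarith
    simp only [sq_sqrt hpos.le]
    field_simp
    ring

lemma hasDerivAt_sq_div_sq_add (ha : 0 < a) (u : ℝ) :
    HasDerivAt (fun u : ℝ => u ^ 2 / (u ^ 2 + a)) (2 * u * a / (u ^ 2 + a) ^ 2) u := by
  have hsq : HasDerivAt (fun u : ℝ => u ^ 2) (2 * u) u := by simpa using hasDerivAt_pow 2 u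
  refine (hsq.div (hsq.add_const a) (by positivity)).congr_deriv ?_
  ring

end SqDivSqAdd

lemma integral_Ioi_exp_neg_sq_div_two : ∫ u in Ioi (0 : ℝ), exp (-u ^ 2 / 2) = √(2 * π) / 2 := by
  have h := integral_gaussian_Ioi (1 / 2)
  rw [show π / (1 / 2) = 2 * π by ring] at h
  simpa only [neg_mul, one_div_mul_eq_div, neg_div] using h

lemma abs_deriv_mul_fZ_sq_div_sq_add {lam u : ℝ} (hlam : lam ≠ 0) (hu : 0 < u) :
    |2 * u * lam ^ 2 / (u ^ 2 + lam ^ 2) ^ 2| * fZ lam (u ^ 2 / (u ^ 2 + lam ^ 2))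
      = 2 / √(2 * π) * exp (-u ^ 2 / 2) := by
  have ha : 0 < lam ^ 2 := by positivity
  set c := u ^ 2 + lam ^ 2
  have hc0 : 0 < c := by positivity
  have hsqrt : √(2 * π * (u ^ 2 / c) * (lam ^ 2 / c) ^ 3) = √(2 * π) * (u * |lam| ^ 3 / c ^ 2) := by
    rw [← sqrt_sq (by positivity : 0 ≤ u * |lam| ^ 3 / c ^ 2), ← sqrt_mul (by positivity)]
    congr 1
    field_simp
    rw [← abs_pow, abs_of_nonneg (by positivity)]
  have hexp : -(lam ^ 2 * (u ^ 2 / c)) / (2 * (lam ^ 2 / c)) = -u ^ 2 / 2 := by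
    field_simp
  rw [fZ, one_sub_sq_div_sq_add ha, hsqrt, hexp, abs_of_pos (by positivity)]
  have : |lam| ^ 3 = |lam| * lam ^ 2 := by rw [pow_succ, sq_abs, mul_comm]
  rw [this]
  field_simp

theorem fZ_integrates_to_one (lam : ℝ) (hlam : lam ≠ 0) :
    ∫ t in Set.Ioo (0 : ℝ) 1,
        |lam| / Real.sqrt (2 * π * t * (1 - t) ^ 3) *
          Real.exp (-(lam ^ 2 * t) / (2 * (1 - t))) = 1 := by
  have ha : 0 < lam ^ 2 := by positivity
  change ∫ t in Ioo 0 1, fZ lam t = 1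
  rw [← image_sq_div_sq_add_Ioi ha,
    integral_image_eq_integral_abs_deriv_smul measurableSet_Ioi
      (fun u _ => (hasDerivAt_sq_div_sq_add ha u).hasDerivWithinAt)
      ((strictMonoOn_sq_div_sq_add ha).injOn.mono Ioi_subset_Ici_self)]
  simp only [smul_eq_mul]
  rw [setIntegral_congr_fun measurableSet_Ioi
      (fun u (hu : 0 < u) => abs_deriv_mul_fZ_sq_div_sq_add hlam hu),
    integral_const_mul, integral_Ioi_exp_neg_sq_div_two]
  have : √(2 * π) ≠ 0 := by positivity
  field_simp
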